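/- arXiv:2401.09902 — 4 statements merged into one kernel-verified Lean document; each statement's English description precedes it below -/
import Mathlib

section
/- Let N ≥ 1, d ≥ 2, and let D = {(x_n, y_n)}_{n=1}^N ⊂ ℝ^d × ℝ^d be a dataset with pairwise distinct inputs x_n and pairwise distinct targets y_n. Then there exists an orthogonal linear map Q : ℝ^d → ℝ^d such that the first coordinates (Q x_n)^{(1)}, n = 1, …, N, are pairwise distinct and the second coordinates (Q y_n)^{(2)}, n = 1, …, N, are pairwise distinct. -/
/-!
The differences `x m - x n` and `y m - y n` (`m ≠ n`) form finite sets `A`, `B` of nonzero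
vectors, and it suffices to find orthonormal `u`, `v` with `⟪u, a⟫ ≠ 0` on `A` and `⟪v, b⟫ ≠ 0`
on `B`: the coordinate maps of an orthonormal basis starting with `u, v` then separate the data.
A vector space over an infinite field is not a finite union of proper subspaces, so there is a
unit vector `u` outside the hyperplanes `aᗮ` (`a ∈ A`) and the lines `𝕜 ∙ b` (`b ∈ B`). Then no
`b ∈ B` is orthogonal to all of `K = uᗮ`, and a unit vector `v ∈ K` outside the hyperplanes
`bᗮ ∩ K` completes the pair.
-/

open Module Finset

theorem Function.Injective.exists_finset_forall_sub_mem {ι G : Type*} [Finite ι] [AddGroup G]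
    {x : ι → G} (hx : Function.Injective x) :
    ∃ A : Finset G, 0 ∉ A ∧ ∀ m n, m ≠ n → x m - x n ∈ A := by
  classical
  have := Fintype.ofFinite ι
  refine ⟨univ.offDiag.image fun p => x p.1 - x p.2, ?_, fun m n h => ?_⟩
  · simp [sub_eq_zero, hx.eq_iff]
  · exact mem_image.mpr ⟨(m, n), by simpa using h, rfl⟩

section Subspace

variable {k V : Type*} [DivisionRing k] [AddCommGroup V] [Module k V]

theorem Subspace.exists_forall_notMem [Infinite k] {s : Finset (Subspace k V)} (hs : ⊤ ∉ s) :
    ∃ v : V, ∀ p ∈ s, v ∉ p := by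
  by_contra! h
  exact Subspace.biUnion_ne_univ_of_top_notMem hs <| Set.eq_univ_of_forall fun v => by
    simpa using h v

theorem Submodule.mem_span_singleton_of_mem_span_singleton {u b : V} (hb : b ≠ 0)
    (h : b ∈ k ∙ u) : u ∈ k ∙ b := by
  obtain ⟨c, rfl⟩ := Submodule.mem_span_singleton.mp h
  have hc : c ≠ 0 := by rintro rfl; simp at hb
  simpa [smul_smul, hc] using Submodule.smul_mem _ c⁻¹ (Submodule.mem_span_singleton_self (c • u))

end Subspace

theorem exists_norm_eq_one_forall_notMem {𝕜 E : Type*} [RCLike 𝕜] [NormedAddCommGroup E]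
    [NormedSpace 𝕜 E] [Nontrivial E] {s : Finset (Submodule 𝕜 E)} (hs : ⊤ ∉ s) :
    ∃ u : E, ‖u‖ = 1 ∧ ∀ p ∈ s, u ∉ p := by
  classical
  obtain ⟨u, hu⟩ := Subspace.exists_forall_notMem (s := insert ⊥ s) (by simp [hs])
  have hu0 : u ≠ 0 := fun h => hu ⊥ (mem_insert_self _ _) (h ▸ zero_mem _)
  refine ⟨(‖u‖ : 𝕜)⁻¹ • u, norm_smul_inv_norm hu0, fun p hp hup => hu p (mem_insert_of_mem hp) ?_⟩
  simpa [smul_smul, hu0] using p.smul_mem (‖u‖ : 𝕜) hup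

section InnerProductSpace

variable {𝕜 E : Type*} [RCLike 𝕜] [NormedAddCommGroup E] [InnerProductSpace 𝕜 E]

local notation "⟪" x ", " y "⟫" => inner 𝕜 x y

theorem exists_orthonormal_pair_forall_inner_ne_zero (hE : 2 ≤ finrank 𝕜 E) {A B : Finset E}
    (hA : 0 ∉ A) (hB : 0 ∉ B) :
    ∃ u v : E, ‖u‖ = 1 ∧ ‖v‖ = 1 ∧ ⟪u, v⟫ = 0 ∧ (∀ a ∈ A, ⟪u, a⟫ ≠ 0) ∧ ∀ b ∈ B, ⟪v, b⟫ ≠ 0 := by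
  classical
  have : FiniteDimensional 𝕜 E := Module.finite_of_finrank_pos (by omega)
  have : Nontrivial E := Module.nontrivial_of_finrank_pos (R := 𝕜) (by omega)
  have hB' : ∀ b ∈ B, b ≠ 0 := fun b hb h => hB (h ▸ hb)
  obtain ⟨u, hu1, hu⟩ := exists_norm_eq_one_forall_notMem
    (s := A.image (fun a => (𝕜 ∙ a)ᗮ) ∪ B.image (fun b => 𝕜 ∙ b)) <| by
      simp only [mem_union, mem_image, not_or, not_exists, not_and]
      refine ⟨fun a ha h => ?_, fun b hb h => ?_⟩
      · rw [Submodule.orthogonal_eq_top_iff, Submodule.span_singleton_eq_bot] at h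
        exact hA (h ▸ ha)
      · have := finrank_span_singleton (K := 𝕜) (hB' b hb)
        rw [h, finrank_top] at this
        omega
  have hu0 : u ≠ 0 := norm_ne_zero_iff.mp (by simp [hu1])
  set K := (𝕜 ∙ u)ᗮ
  have : Nontrivial K := by
    have := K.finrank_add_finrank_orthogonal
    rw [Submodule.orthogonal_orthogonal, finrank_span_singleton hu0] at this
    exact Module.nontrivial_of_finrank_pos (R := 𝕜) (by omega)
  obtain ⟨v, hv1, hv⟩ := exists_norm_eq_one_forall_notMem
    (s := B.image fun b => (𝕜 ∙ b)ᗮ.comap K.subtype) <| by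
      simp only [mem_image, not_exists, not_and]
      intro b hb h
      rw [Submodule.comap_subtype_eq_top] at h
      have hbK : b ∈ Kᗮ := (K.mem_orthogonal b).2 fun k hk =>
        Submodule.mem_orthogonal_singleton_iff_inner_left.mp (h hk)
      rw [Submodule.orthogonal_orthogonal] at hbK
      exact hu _ (mem_union_right _ (mem_image_of_mem _ hb))
        (Submodule.mem_span_singleton_of_mem_span_singleton (hB' b hb) hbK)
  refine ⟨u, v, hu1, by simpa using hv1, Submodule.mem_orthogonal_singleton_iff_inner_right.mp v.2,
    fun a ha h => ?_, fun b hb h => ?_⟩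
  · exact hu _ (mem_union_left _ (mem_image_of_mem _ ha))
      (Submodule.mem_orthogonal_singleton_iff_inner_left.mpr h)
  · exact hv _ (mem_image_of_mem _ hb) (Submodule.mem_orthogonal_singleton_iff_inner_left.mpr h)

theorem exists_orthonormalBasis_apply_eq_of_pair [FiniteDimensional 𝕜 E] {ι : Type*} [Fintype ι]
    [DecidableEq ι] (hι : finrank 𝕜 E = Fintype.card ι) {i j : ι} (hij : i ≠ j) {u v : E}
    (hu : ‖u‖ = 1) (hv : ‖v‖ = 1) (huv : ⟪u, v⟫ = 0) :
    ∃ b : OrthonormalBasis ι 𝕜 E, b i = u ∧ b j = v := by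
  have hvu : ⟪v, u⟫ = 0 := inner_eq_zero_symm.mp huv
  obtain ⟨b, hb⟩ := Orthonormal.exists_orthonormalBasis_extension_of_card_eq hι
    (v := fun k => if k = i then u else v) (s := {i, j}) <| by
      rw [orthonormal_iff_ite]
      rintro ⟨k, rfl | rfl⟩ ⟨l, rfl | rfl⟩ <;>
        simp [hij, hij.symm, hu, hv, huv, hvu, inner_self_eq_norm_sq_to_K, Subtype.ext_iff]
  exact ⟨b, by simpa using hb i, by simpa [hij.symm] using hb j⟩

theorem injective_inner_of_inner_sub_ne_zero {ι : Type*} {x : ι → E} {w : E}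
    (h : ∀ m n, m ≠ n → ⟪w, x m - x n⟫ ≠ 0) : Function.Injective fun n => ⟪w, x n⟫ :=
  fun m n hmn => by_contra fun hne => h m n hne (by rw [inner_sub_right]; exact sub_eq_zero.mpr hmn)

end InnerProductSpace

/-- There is an orthogonal change of coordinates making the first coordinates of
the inputs pairwise distinct and the second coordinates of the targets pairwise
distinct. -/
theorem statement3 (N d : ℕ) (hd : 2 ≤ d)
    (x y : Fin N → EuclideanSpace ℝ (Fin d))
    (hx : Function.Injective x) (hy : Function.Injective y) :
    ∃ Q : EuclideanSpace ℝ (Fin d) ≃ₗᵢ[ℝ] EuclideanSpace ℝ (Fin d),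
      Function.Injective (fun n : Fin N => Q (x n) ⟨0, by omega⟩) ∧
      Function.Injective (fun n : Fin N => Q (y n) ⟨1, by omega⟩) := by
  obtain ⟨A, hA, hxA⟩ := hx.exists_finset_forall_sub_mem
  obtain ⟨B, hB, hyB⟩ := hy.exists_finset_forall_sub_mem
  obtain ⟨u, v, hu, hv, huv, hAu, hBv⟩ :=
    exists_orthonormal_pair_forall_inner_ne_zero (𝕜 := ℝ) (by simpa using hd) hA hB
  obtain ⟨b, rfl, rfl⟩ := exists_orthonormalBasis_apply_eq_of_pair (by simp)
    (i := (⟨0, by omega⟩ : Fin d)) (j := ⟨1, by omega⟩) (by simp) hu hv huv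
  refine ⟨b.repr, ?_, ?_⟩ <;> simp only [b.repr_apply_apply]
  · exact injective_inner_of_inner_sub_ne_zero fun m n h => hAu _ (hxA m n h)
  · exact injective_inner_of_inner_sub_ne_zero fun m n h => hBv _ (hyB m n h)
end

section
/- Let d ≥ 1 and let μ = ν^{⊗d} be the d-fold product of a compactly supported, absolutely continuous probability measure ν on ℝ (so μ is a compactly supported, absolutely continuous probability measure on ℝ^d whose coordinate marginals are independent and identically distributed). Let x_1, …, x_N, y_1, …, y_N be sampled i.i.d. from μ. Then for all sufficiently large N, the probability P that the sample satisfies Assumption 1 obeys 1 − [1 − (1/√2)(e/(2N))^N]^d ≤ P ≤ 1. -/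
open MeasureTheory Set
open scoped ENNReal

section AuxSep

lemma mp_piComm {ι κ : Type*} [Fintype ι] [Fintype κ] (ν : Measure ℝ) [IsProbabilityMeasure ν] :
    MeasurePreserving (fun (f : ι → κ → ℝ) (k : κ) (i : ι) => f i k)
      (Measure.pi fun _ : ι => Measure.pi fun _ : κ => ν)
      (Measure.pi fun _ : κ => Measure.pi fun _ : ι => ν) := by
  classical
  have hmeas : Measurable (fun (f : ι → κ → ℝ) (k : κ) (i : ι) => f i k) :=
    measurable_pi_lambda _ fun k => measurable_pi_lambda _ fun i =>
      (measurable_pi_apply k).comp (measurable_pi_apply i)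
  refine ⟨hmeas, ?_⟩
  set C : Set (Set (ι → ℝ)) :=
    Set.pi univ '' Set.pi univ (fun _ : ι => {s : Set ℝ | MeasurableSet s}) with hCdef
  have hCmeas : ∀ s ∈ C, MeasurableSet s := by
    intro s hs
    exact (generateFrom_pi (α := fun _ : ι => ℝ)) ▸ MeasurableSpace.measurableSet_generateFrom hs
  have huniv : (univ : Set (ι → ℝ)) ∈ C :=
    ⟨fun _ => univ, fun _ _ => (MeasurableSet.univ : MeasurableSet (univ : Set ℝ)), by simp⟩
  refine (Measure.pi_eq_generateFrom (C := fun _ : κ => C)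
    (fun _ => generateFrom_pi) (fun _ => isPiSystem_pi) (fun _ => ?_) ?_).symm
  · exact ⟨fun _ => univ, fun _ => huniv, fun _ => by simp [measure_lt_top], by simp [Set.iUnion_const]⟩
  · intro s hs
    choose t ht hts using hs
    rw [Measure.map_apply hmeas (MeasurableSet.univ_pi fun k => hCmeas _ ⟨t k, ht k, hts k⟩)]
    have hpre : (fun (f : ι → κ → ℝ) (k : κ) (i : ι) => f i k) ⁻¹' (univ.pi s) =
        univ.pi (fun i : ι => univ.pi fun k : κ => t k i) := by
      ext f
      have hmem : ∀ k, ((fun i => f i k) ∈ s k ↔ ∀ i, f i k ∈ t k i) := by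
        intro k; rw [← hts k]; simp [Set.mem_pi]
      simp only [mem_preimage, mem_pi, mem_univ, forall_true_left, hmem]
      exact forall_comm
    rw [hpre, Measure.pi_pi]
    simp_rw [Measure.pi_pi]
    rw [Finset.prod_comm]
    congr 1
    ext k
    rw [← hts k, Measure.pi_pi]

section OrdEvt
variable {ι : Type*} [Fintype ι] [DecidableEq ι] {m : ℕ}
variable (ν : Measure ℝ) [IsProbabilityMeasure ν]

/-- order event -/
def ordEvt (e : Fin m ≃ ι) : Set (ι → ℝ) := {z | StrictMono fun k => z (e k)}

lemma measurableSet_ordEvt (e : Fin m ≃ ι) : MeasurableSet (ordEvt e) := by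
  have : ordEvt e = ⋂ (k : Fin m) (l : Fin m) (_ : k < l), {z : ι → ℝ | z (e k) < z (e l)} := by
    ext z
    constructor
    · intro h
      simp only [mem_iInter]
      intro k l hkl
      exact h hkl
    · intro h k l hkl
      simp only [mem_iInter] at h
      exact h k l hkl
  rw [this]
  exact MeasurableSet.iInter fun k => MeasurableSet.iInter fun l => MeasurableSet.iInter fun _ =>
    measurableSet_lt (measurable_pi_apply _) (measurable_pi_apply _)

lemma mp_compPerm (π : ι ≃ ι) :
    MeasurePreserving (fun (z : ι → ℝ) (x : ι) => z (π x))
      (Measure.pi fun _ : ι => ν) (Measure.pi fun _ : ι => ν) := by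
  have hmeas : Measurable (fun (z : ι → ℝ) (x : ι) => z (π x)) :=
    measurable_pi_lambda _ fun x => measurable_pi_apply _
  refine ⟨hmeas, ?_⟩
  refine (Measure.pi_eq fun s hs => ?_).symm
  rw [Measure.map_apply hmeas (MeasurableSet.univ_pi hs)]
  have hpre : (fun (z : ι → ℝ) (x : ι) => z (π x)) ⁻¹' (univ.pi s) =
      univ.pi (fun y => s (π.symm y)) := by
    ext z
    simp only [mem_preimage, mem_pi, mem_univ, forall_true_left]
    exact ⟨fun h y => by simpa using h (π.symm y), fun h x => by simpa using h (π x)⟩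
  rw [hpre, Measure.pi_pi]
  exact Fintype.prod_equiv π.symm _ _ fun y => rfl

lemma measure_ordEvt_eq (e e' : Fin m ≃ ι) :
    (Measure.pi fun _ : ι => ν) (ordEvt e) = (Measure.pi fun _ : ι => ν) (ordEvt e') := by
  set π : ι ≃ ι := e'.symm.trans e with hπ
  have hpre : ordEvt e = (fun (z : ι → ℝ) (x : ι) => z (π x)) ⁻¹' ordEvt e' := by
    ext z
    simp only [ordEvt, mem_preimage, mem_setOf_eq]
    have : ∀ k, z (π (e' k)) = z (e k) := fun k => by simp [hπ]
    have h2 : (fun k => z (π (e' k))) = fun k => z (e k) := funext this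
    constructor
    · intro h; exact h2 ▸ h
    · intro h; exact h2.symm ▸ h
  rw [hpre, (mp_compPerm ν π).measure_preimage
    (measurableSet_ordEvt e').nullMeasurableSet]

lemma ordEvt_disjoint {e e' : Fin m ≃ ι} (h : e ≠ e') : Disjoint (ordEvt e) (ordEvt e') := by
  rw [Set.disjoint_left]
  intro z h1 h2
  apply h
  have hzinj : Function.Injective z := by
    intro a b hab
    have h3 : e.symm a = e.symm b := h1.injective (by simpa using hab)
    simpa using congrArg e h3
  set g : Fin m ≃ Fin m := e'.trans e.symm with hg
  have hcomp : ∀ k, z (e' k) = z (e (g k)) := fun k => by simp [hg]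
  have hgmono : StrictMono (g : Fin m → Fin m) := by
    intro k l hkl
    have : z (e (g k)) < z (e (g l)) := by rw [← hcomp, ← hcomp]; exact h2 hkl
    exact h1.lt_iff_lt.mp this
  have hgid : (g : Fin m → Fin m) = id := by
    have := (hgmono.range_inj strictMono_id).mp (by
      rw [Set.range_eq_univ.mpr g.surjective, Set.range_eq_univ.mpr
        Function.surjective_id])
    exact this
  ext k
  have : g k = k := congrFun hgid k
  have := congrArg e this
  simpa [hg] using this.symm

lemma ordEvt_cover (e0 : Fin m ≃ ι) {z : ι → ℝ} (hz : Function.Injective z) :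
    ∃ e : Fin m ≃ ι, z ∈ ordEvt e := by
  classical
  set w : Fin m → ℝ := fun k => z (e0 k) with hw
  refine ⟨(Tuple.sort w).trans e0, ?_⟩
  have hmono : Monotone (w ∘ Tuple.sort w) := Tuple.monotone_sort w
  have hinj : Function.Injective (w ∘ Tuple.sort w) :=
    (hz.comp e0.injective).comp (Tuple.sort w).injective
  have : StrictMono (w ∘ Tuple.sort w) := hmono.strictMono_of_injective hinj
  exact this

lemma measure_eq_pair_null (hac : ν ≪ volume) (i j : ι) (hij : i ≠ j) :
    (Measure.pi fun _ : ι => ν) {z : ι → ℝ | z i = z j} = 0 := by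
  classical
  have hmeas : Measurable (fun z : ι → ℝ => ((z i, z j) : ℝ × ℝ)) :=
    (measurable_pi_apply i).prodMk (measurable_pi_apply j)
  have hmap : (Measure.pi fun _ : ι => ν).map (fun z : ι → ℝ => ((z i, z j) : ℝ × ℝ))
      = ν.prod ν := by
    refine (Measure.prod_eq fun s t hs ht => ?_).symm
    rw [Measure.map_apply hmeas (hs.prod ht)]
    have hpre : (fun z : ι → ℝ => ((z i, z j) : ℝ × ℝ)) ⁻¹' (s ×ˢ t) =
        univ.pi (fun l => if l = i then s else if l = j then t else univ) := by
      ext z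
      simp only [mem_preimage, mem_prod, mem_pi, mem_univ, forall_true_left]
      constructor
      · rintro ⟨h1, h2⟩ l
        by_cases hli : l = i <;> by_cases hlj : l = j <;> simp_all
      · intro h
        have h1 := h i
        have h2 := h j
        simp only [if_pos rfl] at h1
        rw [if_neg (Ne.symm hij), if_pos rfl] at h2
        exact ⟨h1, h2⟩
    rw [hpre, Measure.pi_pi]
    rw [Finset.prod_eq_mul_prod_sdiff_singleton_of_mem (Finset.mem_univ i),
      Finset.prod_eq_mul_prod_sdiff_singleton_of_mem (i := j)
        (by simp [Finset.mem_sdiff, hij.symm])]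
    simp only [if_pos rfl, if_neg hij.symm, if_pos rfl]
    have : ∀ l ∈ (Finset.univ \ {i} : Finset ι) \ {j},
        ν (if l = i then s else if l = j then t else univ) = 1 := by
      intro l hl
      simp only [Finset.mem_sdiff, Finset.mem_singleton] at hl
      simp [hl.1.2, hl.2, measure_univ]
    rw [Finset.prod_congr rfl this]
    simp [measure_univ]
  have hdiag : MeasurableSet {p : ℝ × ℝ | p.1 = p.2} :=
    measurableSet_eq_fun measurable_fst measurable_snd
  have : {z : ι → ℝ | z i = z j} =
      (fun z : ι → ℝ => ((z i, z j) : ℝ × ℝ)) ⁻¹' {p : ℝ × ℝ | p.1 = p.2} := rfl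
  rw [this, ← Measure.map_apply hmeas hdiag, hmap]
  rw [Measure.prod_apply hdiag]
  have : ∀ x : ℝ, ν (Prod.mk x ⁻¹' {p : ℝ × ℝ | p.1 = p.2}) = 0 := by
    intro x
    have hx : Prod.mk x ⁻¹' {p : ℝ × ℝ | p.1 = p.2} = {x} := by
      ext y; simp [eq_comm]
    rw [hx]
    exact hac Real.volume_singleton
  rw [lintegral_congr this]
  simp

lemma ordEvt_measure (hac : ν ≪ volume) (e : Fin m ≃ ι) :
    (Measure.pi fun _ : ι => ν) (ordEvt e) = ((Nat.factorial m : ℕ) : ℝ≥0∞)⁻¹ := by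
  classical
  set μ : Measure (ι → ℝ) := Measure.pi fun _ : ι => ν with hμ
  haveI : IsProbabilityMeasure μ := by
    constructor
    rw [hμ]
    simp [Measure.pi_univ]
  have hnoninj : μ {z : ι → ℝ | ¬ Function.Injective z} = 0 := by
    have hsub : {z : ι → ℝ | ¬ Function.Injective z} ⊆
        ⋃ p : ι × ι, {z : ι → ℝ | p.1 ≠ p.2 ∧ z p.1 = z p.2} := by
      intro z hz
      simp only [mem_setOf_eq, Function.Injective, not_forall] at hz
      obtain ⟨a, b, hab, hne⟩ := hz
      exact mem_iUnion.mpr ⟨(a, b), hne, hab⟩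
    refine measure_mono_null hsub (measure_iUnion_null fun p => ?_)
    by_cases hp : p.1 = p.2
    · have : {z : ι → ℝ | p.1 ≠ p.2 ∧ z p.1 = z p.2} = ∅ := by
        ext z; simp [hp]
      simp [this]
    · exact measure_mono_null (fun z hz => hz.2) (measure_eq_pair_null ν hac p.1 p.2 hp)
  have hinj_one : μ {z : ι → ℝ | Function.Injective z} = 1 := by
    refine le_antisymm prob_le_one ?_
    have := measure_union_le (μ := μ) {z : ι → ℝ | Function.Injective z}
      {z : ι → ℝ | ¬ Function.Injective z}
    have hcover : {z : ι → ℝ | Function.Injective z} ∪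
        {z : ι → ℝ | ¬ Function.Injective z} = univ := by
      ext z; by_cases h : Function.Injective z <;> simp [h]
    rw [hcover, measure_univ, hnoninj, add_zero] at this
    exact this
  have hUnion : μ (⋃ e' : Fin m ≃ ι, ordEvt e') = 1 := by
    refine le_antisymm prob_le_one ?_
    rw [← hinj_one]
    exact measure_mono fun z hz => mem_iUnion.mpr (ordEvt_cover e hz)
  rw [measure_iUnion (fun e1 e2 h12 => ordEvt_disjoint h12)
    (fun e' => measurableSet_ordEvt e')] at hUnion
  rw [tsum_fintype] at hUnion
  have hconst : ∀ e' : Fin m ≃ ι, μ (ordEvt e') = μ (ordEvt e) :=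
    fun e' => measure_ordEvt_eq ν e' e
  rw [Finset.sum_congr rfl (fun e' _ => hconst e'), Finset.sum_const] at hUnion
  have hcard : (Finset.univ : Finset (Fin m ≃ ι)).card = Nat.factorial m := by
    rw [Finset.card_univ, Fintype.card_equiv e]
    simp
  rw [hcard] at hUnion
  have hfact0 : ((Nat.factorial m : ℕ) : ℝ≥0∞) ≠ 0 := by
    simp [Nat.factorial_ne_zero]
  have hfactTop : ((Nat.factorial m : ℕ) : ℝ≥0∞) ≠ ⊤ := by simp
  calc μ (ordEvt e) = ((Nat.factorial m : ℕ) : ℝ≥0∞)⁻¹ * (Nat.factorial m • μ (ordEvt e)) := by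
        rw [nsmul_eq_mul, ← mul_assoc, ENNReal.inv_mul_cancel hfact0 hfactTop, one_mul]
    _ = ((Nat.factorial m : ℕ) : ℝ≥0∞)⁻¹ := by rw [hUnion, mul_one]

lemma ordEvt_iUnion_measure (hac : ν ≪ volume) {I : Type*} [Fintype I]
    (E : I → (Fin m ≃ ι)) (hE : Function.Injective E) :
    (Measure.pi fun _ : ι => ν) (⋃ i : I, ordEvt (E i)) =
      (Fintype.card I : ℝ≥0∞) * ((Nat.factorial m : ℕ) : ℝ≥0∞)⁻¹ := by
  classical
  haveI : Countable I := Finite.to_countable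
  rw [measure_iUnion (fun i1 i2 h12 => ordEvt_disjoint (fun h => h12 (hE h)))
    (fun i => measurableSet_ordEvt (E i))]
  rw [tsum_fintype]
  rw [Finset.sum_congr rfl (fun i _ => ordEvt_measure ν hac (E i))]
  rw [Finset.sum_const, Finset.card_univ, nsmul_eq_mul]

end OrdEvt

variable {N : ℕ}

/-- base equiv: position `k` ↦ (pair index `k/2`, side `k%2=1`) -/
def pairB (N : ℕ) : Fin (N + N) ≃ Fin N × Bool where
  toFun k := (⟨k.1 / 2, by omega⟩, decide (k.1 % 2 = 1))
  invFun p := ⟨2 * p.1.1 + (if p.2 then 1 else 0), by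
    rcases p with ⟨⟨a, ha⟩, b⟩; cases b <;> simp <;> omega⟩
  left_inv k := by
    apply Fin.ext
    simp only
    rcases Nat.mod_two_eq_zero_or_one k.1 with h | h <;> simp [h] <;> omega
  right_inv p := by
    rcases p with ⟨⟨a, ha⟩, b⟩
    cases b <;> simp <;> omega

/-- flip sides according to ε -/
def flipE (ε : Fin N → Bool) : Fin N × Bool ≃ Fin N × Bool :=
  Function.Involutive.toPerm (fun p => (p.1, xor p.2 (ε p.1)))
    (fun p => by simp [Bool.xor_assoc])

def pairsToSum (N : ℕ) : Fin N × Bool ≃ (Fin N ⊕ Fin N) :=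
  (Equiv.prodComm _ _).trans (Equiv.boolProdEquivSum (Fin N))

/-- the full pairing equiv -/
def pairEquiv (τ : Equiv.Perm (Fin N)) (ε : Fin N → Bool) : Fin (N + N) ≃ (Fin N ⊕ Fin N) :=
  ((pairB N).trans ((Equiv.prodCongr τ (Equiv.refl Bool)).trans (flipE ε))).trans (pairsToSum N)

def posLo (n : Fin N) : Fin (N + N) := ⟨2 * n.1, by omega⟩
def posHi (n : Fin N) : Fin (N + N) := ⟨2 * n.1 + 1, by omega⟩

lemma pairEquiv_posLo (τ : Equiv.Perm (Fin N)) (ε : Fin N → Bool) (n : Fin N) :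
    pairEquiv τ ε (posLo n) =
      (if ε (τ n) then Sum.inr (τ n) else Sum.inl (τ n)) := by
  have h1 : (pairB N) (posLo n) = (n, false) := by
    simp only [pairB, posLo, Equiv.coe_fn_mk]
    refine Prod.ext ?_ ?_
    · apply Fin.ext; show 2 * n.1 / 2 = n.1; omega
    · show decide (2 * n.1 % 2 = 1) = false
      simp only [decide_eq_false_iff_not]; omega
  simp only [pairEquiv, Equiv.trans_apply, h1]
  simp only [Equiv.prodCongr_apply, Equiv.coe_refl, Prod.map_apply, id_eq]
  cases hb : ε (τ n) <;>
    simp [flipE, pairsToSum, Function.Involutive.toPerm, hb, Equiv.boolProdEquivSum]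

lemma pairEquiv_posHi (τ : Equiv.Perm (Fin N)) (ε : Fin N → Bool) (n : Fin N) :
    pairEquiv τ ε (posHi n) =
      (if ε (τ n) then Sum.inl (τ n) else Sum.inr (τ n)) := by
  have h1 : (pairB N) (posHi n) = (n, true) := by
    simp only [pairB, posHi, Equiv.coe_fn_mk]
    refine Prod.ext ?_ ?_
    · apply Fin.ext; show (2 * n.1 + 1) / 2 = n.1; omega
    · show decide ((2 * n.1 + 1) % 2 = 1) = true
      simp only [decide_eq_true_iff]; omega
  simp only [pairEquiv, Equiv.trans_apply, h1]
  simp only [Equiv.prodCongr_apply, Equiv.coe_refl, Prod.map_apply, id_eq]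
  cases hb : ε (τ n) <;>
    simp [flipE, pairsToSum, Function.Involutive.toPerm, hb, Equiv.boolProdEquivSum]

lemma pairEquiv_injective :
    Function.Injective (fun p : Equiv.Perm (Fin N) × (Fin N → Bool) =>
      pairEquiv p.1 p.2) := by
  rintro ⟨τ, ε⟩ ⟨τ', ε'⟩ h
  simp only at h
  have key : ∀ n : Fin N, τ n = τ' n ∧ ε (τ n) = ε' (τ' n) := by
    intro n
    have h0 := congrArg (fun e : Fin (N + N) ≃ (Fin N ⊕ Fin N) => e (posLo n)) h
    simp only [pairEquiv_posLo] at h0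
    cases hb : ε (τ n) <;> cases hb' : ε' (τ' n) <;>
      rw [hb, hb'] at h0 <;> simp_all
  have hτ : τ = τ' := Equiv.ext fun n => (key n).1
  subst hτ
  have hε : ε = ε' := by
    funext x
    obtain ⟨n, rfl⟩ := τ.surjective x
    exact (key n).2
  simp [hε]

section Sandwich
variable {N : ℕ}

lemma exists_b_of_ordEvt (hN : 0 < N) (τ : Equiv.Perm (Fin N)) (ε : Fin N → Bool)
    {z : (Fin N ⊕ Fin N) → ℝ} (hz : StrictMono fun k => z (pairEquiv τ ε k)) :
    ∃ b : Fin (N + 1) → ℝ, StrictAnti b ∧ ∀ n : Fin N,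
      (-b n.castSucc < z (Sum.inl (τ n)) ∧ z (Sum.inl (τ n)) < -b n.succ) ∧
      (-b n.castSucc < z (Sum.inr (τ n)) ∧ z (Sum.inr (τ n)) < -b n.succ) := by
  set w : Fin (N + N) → ℝ := fun k => z (pairEquiv τ ε k) with hw
  have hmono : ∀ p q : Fin (N + N), p.1 < q.1 → w p < w q := by
    intro p q h
    exact hz (by exact h)
  have hmonole : ∀ p q : Fin (N + N), p.1 ≤ q.1 → w p ≤ w q := by
    intro p q h
    rcases Nat.lt_or_ge p.1 q.1 with h' | h'
    · exact le_of_lt (hmono p q h')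
    · have : p = q := Fin.ext (le_antisymm h h')
      exact this ▸ le_rfl
  -- the separator sequence
  set c : Fin (N + 1) → ℝ := fun j =>
    if j.1 = 0 then w ⟨0, by omega⟩ - 1
    else if j.1 = N then w ⟨N + N - 1, by omega⟩ + 1
    else (w ⟨2 * j.1 - 1, by have := j.isLt; omega⟩ +
      w ⟨min (2 * j.1) (N + N - 1), by omega⟩) / 2 with hc
  have keyLo : ∀ n : Fin N, c n.castSucc < w (posLo n) := by
    intro n
    by_cases h0 : n.1 = 0
    · have hcs : c n.castSucc = w ⟨0, by omega⟩ - 1 := by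
        simp only [hc, Fin.coe_castSucc, h0, if_true, if_pos rfl]
      rw [hcs]
      have hle : w ⟨0, by omega⟩ ≤ w (posLo n) := hmonole _ _ (by show 0 ≤ 2 * n.1; omega)
      linarith
    · have hcs : c n.castSucc = (w ⟨2 * n.1 - 1, by have := n.isLt; omega⟩ +
          w ⟨2 * n.1, by have := n.isLt; omega⟩) / 2 := by
        have hlt := n.isLt
        simp only [hc, Fin.coe_castSucc]
        rw [if_neg h0, if_neg (by omega)]
        have hmin : (⟨min (2 * n.1) (N + N - 1), by omega⟩ : Fin (N + N)) =
            ⟨2 * n.1, by omega⟩ := Fin.ext (by simp; omega)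
        rw [hmin]
      rw [hcs]
      have h1 : w ⟨2 * n.1 - 1, by have := n.isLt; omega⟩ <
          w ⟨2 * n.1, by have := n.isLt; omega⟩ :=
        hmono _ _ (by show 2 * n.1 - 1 < 2 * n.1; omega)
      have h2 : w (⟨2 * n.1, by have := n.isLt; omega⟩ : Fin (N + N)) = w (posLo n) := rfl
      rw [h2] at h1 ⊢
      linarith
  have keyHi : ∀ n : Fin N, w (posHi n) < c n.succ := by
    intro n
    by_cases hN' : n.1 + 1 = N
    · have hcs : c n.succ = w ⟨N + N - 1, by omega⟩ + 1 := by
        simp only [hc, Fin.val_succ]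
        rw [if_neg (by omega), if_pos hN']
      rw [hcs]
      have hle : w (posHi n) ≤ w ⟨N + N - 1, by omega⟩ := by
        have hlt := n.isLt
        exact hmonole _ _ (by show 2 * n.1 + 1 ≤ N + N - 1; omega)
      linarith
    · have hlt := n.isLt
      have hcs : c n.succ = (w ⟨2 * (n.1 + 1) - 1, by omega⟩ +
          w ⟨2 * (n.1 + 1), by omega⟩) / 2 := by
        simp only [hc, Fin.val_succ]
        rw [if_neg (by omega), if_neg hN']
        have hmin : (⟨min (2 * (n.1 + 1)) (N + N - 1), by omega⟩ : Fin (N + N)) =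
            ⟨2 * (n.1 + 1), by omega⟩ := Fin.ext (by simp; omega)
        rw [hmin]
      rw [hcs]
      have h0 : posHi n = (⟨2 * (n.1 + 1) - 1, by omega⟩ : Fin (N + N)) :=
        Fin.ext (by show 2 * n.1 + 1 = 2 * (n.1 + 1) - 1; omega)
      have h2 : w ⟨2 * (n.1 + 1) - 1, by omega⟩ < w ⟨2 * (n.1 + 1), by omega⟩ :=
        hmono _ _ (by show 2 * (n.1 + 1) - 1 < 2 * (n.1 + 1); omega)
      rw [h0]
      linarith
  have hLoHi : ∀ n : Fin N, w (posLo n) < w (posHi n) := fun n =>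
    hmono _ _ (by show 2 * n.1 < 2 * n.1 + 1; omega)
  have hcmono : StrictMono c := by
    rw [Fin.strictMono_iff_lt_succ]
    intro n
    calc c n.castSucc < w (posLo n) := keyLo n
      _ < w (posHi n) := hLoHi n
      _ < c n.succ := keyHi n
  refine ⟨fun j => -c j, fun i j hij => neg_lt_neg (hcmono hij), ?_⟩
  intro n
  have e1 := pairEquiv_posLo τ ε n
  have e2 := pairEquiv_posHi τ ε n
  have hvals : (z (Sum.inl (τ n)) = w (posLo n) ∧ z (Sum.inr (τ n)) = w (posHi n)) ∨
      (z (Sum.inl (τ n)) = w (posHi n) ∧ z (Sum.inr (τ n)) = w (posLo n)) := by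
    cases hb : ε (τ n)
    · rw [hb] at e1 e2
      simp only [Bool.false_eq_true, if_false] at e1 e2
      exact Or.inl ⟨by simp only [hw]; rw [e1], by simp only [hw]; rw [e2]⟩
    · rw [hb] at e1 e2
      simp only [if_true] at e1 e2
      exact Or.inr ⟨by simp only [hw]; rw [e2], by simp only [hw]; rw [e1]⟩
  have hlo : c n.castSucc < w (posLo n) := keyLo n
  have hhi : w (posHi n) < c n.succ := keyHi n
  have hlh := hLoHi n
  simp only [neg_neg]
  rcases hvals with ⟨ha, hb'⟩ | ⟨ha, hb'⟩ <;> rw [ha, hb'] <;>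
    exact ⟨⟨by linarith, by linarith⟩, ⟨by linarith, by linarith⟩⟩
end Sandwich

lemma stirling_lb {N : ℕ} (hN : 1 ≤ N) :
    (1 / Real.sqrt 2) * (Real.exp 1 / (2 * N)) ^ N ≤
      ((Nat.factorial N : ℝ) * 2 ^ N) / (Nat.factorial (N + N) : ℝ) := by
  set x : ℝ := (N : ℝ) with hx
  have hxpos : (0 : ℝ) < x := by
    rw [hx]; exact_mod_cast Nat.lt_of_lt_of_le Nat.zero_lt_one hN
  have hE : (0 : ℝ) < Real.exp 1 := Real.exp_pos 1
  set s1 : ℝ := Stirling.stirlingSeq N with hs1def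
  set s2 : ℝ := Stirling.stirlingSeq (N + N) with hs2def
  obtain ⟨k, rfl⟩ : ∃ k, N = k + 1 := ⟨N - 1, by omega⟩
  have hs1pos : 0 < s1 := Stirling.stirlingSeq'_pos k
  have hs2pos : 0 < s2 := by
    have heq : (k + 1) + (k + 1) = (k + (k + 1)) + 1 := by omega
    rw [hs2def, heq]
    exact Stirling.stirlingSeq'_pos _
  have hmono : s2 ≤ s1 := by
    have heq : (k + 1) + (k + 1) = (k + (k + 1)) + 1 := by omega
    rw [hs2def, hs1def, heq]
    exact Stirling.stirlingSeq'_antitone (Nat.le_add_right k (k + 1))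
  set N' := k + 1 with hN'
  -- factorial formulas
  have hden1 : (0:ℝ) < Real.sqrt (2 * x) * (x / Real.exp 1) ^ N' := by positivity
  have hfac1 : (Nat.factorial N' : ℝ) = s1 * (Real.sqrt (2 * x) * (x / Real.exp 1) ^ N') := by
    rw [hs1def, Stirling.stirlingSeq, div_mul_cancel₀]
    exact ne_of_gt hden1
  have hxx : ((N' + N' : ℕ) : ℝ) = x + x := by push_cast [hx]; ring
  have hden2 : (0:ℝ) < Real.sqrt (2 * (x + x)) * ((x + x) / Real.exp 1) ^ (N' + N') := by
    positivity
  have hfac2 : (Nat.factorial (N' + N') : ℝ) =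
      s2 * (Real.sqrt (2 * (x + x)) * ((x + x) / Real.exp 1) ^ (N' + N')) := by
    rw [hs2def, Stirling.stirlingSeq, hxx, div_mul_cancel₀]
    exact ne_of_gt hden2
  -- simplify the square root
  have hsqrt : Real.sqrt (2 * (x + x)) = Real.sqrt (2 * x) * Real.sqrt 2 := by
    rw [← Real.sqrt_mul (by positivity)]
    ring_nf
  have hsqrt2pos : (0:ℝ) < Real.sqrt 2 := by positivity
  have hsqrt2xpos : (0:ℝ) < Real.sqrt (2 * x) := by positivity
  -- key identity
  have hkey : ((Nat.factorial N' : ℝ) * 2 ^ N') / (Nat.factorial (N' + N') : ℝ) =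
      (s1 / s2) * ((1 / Real.sqrt 2) * (Real.exp 1 / (2 * x)) ^ N') := by
    rw [hfac1, hfac2, hsqrt]
    have hpow : ((x + x) / Real.exp 1) ^ (N' + N') =
        ((2 * x) / Real.exp 1) ^ N' * ((2 * x) / Real.exp 1) ^ N' := by
      rw [← pow_add]
      congr 2
      ring
    rw [hpow]
    have h2 : (x / Real.exp 1) ^ N' * 2 ^ N' = ((2 * x) / Real.exp 1) ^ N' := by
      rw [← mul_pow]
      congr 1
      field_simp
    have hEpow : (Real.exp 1 / (2 * x)) ^ N' * ((2 * x) / Real.exp 1) ^ N' = 1 := by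
      rw [← mul_pow, div_mul_div_comm, mul_comm (Real.exp 1) (2 * x), div_self (by positivity),
        one_pow]
    rw [eq_inv_of_mul_eq_one_left hEpow]
    rw [show s1 * (Real.sqrt (2 * x) * (x / Real.exp 1) ^ N') * 2 ^ N' =
        s1 * Real.sqrt (2 * x) * ((2 * x) / Real.exp 1) ^ N' by rw [← h2]; ring]
    have hC : 0 < ((2 * x) / Real.exp 1) ^ N' := by positivity
    generalize ((2 * x) / Real.exp 1) ^ N' = C at hC ⊢
    field_simp
  rw [hkey]
  have hc : 0 ≤ (1 / Real.sqrt 2) * (Real.exp 1 / (2 * x)) ^ N' := by positivity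
  have hs : 1 ≤ s1 / s2 := (one_le_div hs2pos).mpr hmono
  calc (1 / Real.sqrt 2) * (Real.exp 1 / (2 * x)) ^ N'
      = 1 * ((1 / Real.sqrt 2) * (Real.exp 1 / (2 * x)) ^ N') := by ring
    _ ≤ (s1 / s2) * ((1 / Real.sqrt 2) * (Real.exp 1 / (2 * x)) ^ N') :=
        mul_le_mul_of_nonneg_right hs hc

end AuxSep

/-- If the dataset is sampled i.i.d. from a compactly supported, absolutely
continuous product measure `μ = ν^{⊗d}` on `ℝ^d`, then for all sufficiently
large `N` the probability `P` that the diagonal separability assumption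
(Assumption 1) holds satisfies `1 - [1 - (1/√2)(e/(2N))^N]^d ≤ P ≤ 1`. -/
theorem statement5 (d : ℕ) (hd : 1 ≤ d) (ν : Measure ℝ)
    [IsProbabilityMeasure ν] (hac : ν ≪ volume)
    (hcomp : ∃ K : Set ℝ, IsCompact K ∧ ν Kᶜ = 0) :
    ∃ N₀ : ℕ, ∀ N : ℕ, N₀ ≤ N →
      ∀ P : ℝ≥0∞,
        P = ((Measure.pi fun _ : Fin N => (Measure.pi fun _ : Fin d => ν)).prod
              (Measure.pi fun _ : Fin N => (Measure.pi fun _ : Fin d => ν)))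
            {ω : (Fin N → Fin d → ℝ) × (Fin N → Fin d → ℝ) |
              ∃ a : Fin d → ℝ, (∑ i, a i ^ 2) = 1 ∧
              ∃ (τ : Equiv.Perm (Fin N)) (b : Fin (N + 1) → ℝ), StrictAnti b ∧
                ∀ n : Fin N,
                  (-b n.castSucc < ∑ i, a i * ω.1 (τ n) i ∧
                    (∑ i, a i * ω.1 (τ n) i) < -b n.succ) ∧
                  (-b n.castSucc < ∑ i, a i * ω.2 (τ n) i ∧
                    (∑ i, a i * ω.2 (τ n) i) < -b n.succ)} →
        1 - (1 - (1 / Real.sqrt 2) * (Real.exp 1 / (2 * N)) ^ N) ^ d ≤ P.toReal ∧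
        P.toReal ≤ 1 := by
  classical
  refine ⟨1, fun N hN1 P hP => ?_⟩
  set μd : Measure (Fin d → ℝ) := Measure.pi fun _ : Fin d => ν with hμd
  set μW : Measure ((Fin N → Fin d → ℝ) × (Fin N → Fin d → ℝ)) :=
    (Measure.pi fun _ : Fin N => μd).prod (Measure.pi fun _ : Fin N => μd) with hμW
  haveI : IsProbabilityMeasure μd := by rw [hμd]; infer_instance
  haveI : IsProbabilityMeasure μW := by rw [hμW]; infer_instance
  set lamZ : Measure ((Fin N ⊕ Fin N) → ℝ) := Measure.pi fun _ : Fin N ⊕ Fin N => ν with hlamZ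
  haveI : IsProbabilityMeasure lamZ := by rw [hlamZ]; infer_instance
  set G : Set ((Fin N ⊕ Fin N) → ℝ) :=
    ⋃ p : Equiv.Perm (Fin N) × (Fin N → Bool), ordEvt (pairEquiv p.1 p.2) with hG
  have hGmeas : MeasurableSet G := MeasurableSet.iUnion fun p => measurableSet_ordEvt _
  have hGq : lamZ G = ((Nat.factorial N * 2 ^ N : ℕ) : ℝ≥0∞) *
      ((Nat.factorial (N + N) : ℕ) : ℝ≥0∞)⁻¹ := by
    rw [hG, hlamZ,
      ordEvt_iUnion_measure ν hac (fun p : Equiv.Perm (Fin N) × (Fin N → Bool) =>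
        pairEquiv p.1 p.2) (fun p q h => pairEquiv_injective h)]
    congr 1
    rw [Fintype.card_prod, Fintype.card_perm, Fintype.card_fin]
    push_cast
    simp [Fintype.card_fun]
  -- the measure-preserving rearrangement
  set e1 := MeasurableEquiv.sumPiEquivProdPi (fun _ : Fin N ⊕ Fin N => (Fin d → ℝ)) with he1
  have mp1 : MeasurePreserving e1.symm μW (Measure.pi fun _ : Fin N ⊕ Fin N => μd) :=
    measurePreserving_sumPiEquivProdPi_symm (fun _ : Fin N ⊕ Fin N => μd)
  have mp2 : MeasurePreserving
      (fun (f : (Fin N ⊕ Fin N) → Fin d → ℝ) (j : Fin d) (s : Fin N ⊕ Fin N) => f s j)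
      (Measure.pi fun _ : Fin N ⊕ Fin N => μd) (Measure.pi fun _ : Fin d => lamZ) :=
    mp_piComm ν
  set T : ((Fin N → Fin d → ℝ) × (Fin N → Fin d → ℝ)) → (Fin d → (Fin N ⊕ Fin N) → ℝ) :=
    (fun (f : (Fin N ⊕ Fin N) → Fin d → ℝ) (j : Fin d) (s : Fin N ⊕ Fin N) => f s j) ∘
      ⇑e1.symm with hT
  have mpT : MeasurePreserving T μW (Measure.pi fun _ : Fin d => lamZ) := mp2.comp mp1
  have hTapp : ∀ ω (j : Fin d) (n : Fin N),
      T ω j (Sum.inl n) = ω.1 n j ∧ T ω j (Sum.inr n) = ω.2 n j := by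
    intro ω j n
    constructor <;> rfl
  set U : Set (Fin d → (Fin N ⊕ Fin N) → ℝ) :=
    ⋃ j : Fin d, {g : Fin d → ((Fin N ⊕ Fin N) → ℝ) | g j ∈ G} with hU
  have hUmeas : MeasurableSet U :=
    MeasurableSet.iUnion fun j => (measurable_pi_apply j) hGmeas
  -- U has measure 1 - (1 - q)^d
  have hUcompl : Uᶜ = Set.pi univ (fun _ : Fin d => Gᶜ) := by
    ext g
    simp [hU, mem_pi]
  have hUmeasure : (Measure.pi fun _ : Fin d => lamZ) U = 1 - (1 - lamZ G) ^ d := by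
    haveI : IsProbabilityMeasure (Measure.pi fun _ : Fin d => lamZ) := by infer_instance
    have h1 : (Measure.pi fun _ : Fin d => lamZ) Uᶜ = (1 - lamZ G) ^ d := by
      rw [hUcompl, Measure.pi_pi]
      rw [prob_compl_eq_one_sub hGmeas]
      simp
    have h2 := prob_compl_eq_one_sub (μ := Measure.pi fun _ : Fin d => lamZ) hUmeas
    rw [h1] at h2
    calc (Measure.pi fun _ : Fin d => lamZ) U
        = 1 - (1 - (Measure.pi fun _ : Fin d => lamZ) U) := by
          rw [ENNReal.sub_sub_cancel ENNReal.one_ne_top prob_le_one]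
      _ = 1 - (1 - lamZ G) ^ d := by rw [← h2]
  -- inclusion into the event
  have hsub : T ⁻¹' U ⊆
      {ω : (Fin N → Fin d → ℝ) × (Fin N → Fin d → ℝ) |
        ∃ a : Fin d → ℝ, (∑ i, a i ^ 2) = 1 ∧
        ∃ (τ : Equiv.Perm (Fin N)) (b : Fin (N + 1) → ℝ), StrictAnti b ∧
          ∀ n : Fin N,
            (-b n.castSucc < ∑ i, a i * ω.1 (τ n) i ∧
              (∑ i, a i * ω.1 (τ n) i) < -b n.succ) ∧
            (-b n.castSucc < ∑ i, a i * ω.2 (τ n) i ∧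
              (∑ i, a i * ω.2 (τ n) i) < -b n.succ)} := by
    intro ω hω
    simp only [mem_preimage, hU, mem_iUnion, mem_setOf_eq] at hω
    obtain ⟨j, hj⟩ := hω
    rw [hG] at hj
    obtain ⟨⟨τ, ε⟩, hord⟩ := mem_iUnion.mp hj
    have hzmono : StrictMono fun k => (T ω j) (pairEquiv τ ε k) := hord
    obtain ⟨b, hbanti, hsand⟩ := exists_b_of_ordEvt (by omega : 0 < N) τ ε hzmono
    refine ⟨fun i => if i = j then 1 else 0, ?_, τ, b, hbanti, ?_⟩
    · have hrw : ∀ i : Fin d, (if i = j then (1:ℝ) else 0) ^ 2 = if i = j then 1 else 0 := by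
        intro i; split <;> norm_num
      rw [Finset.sum_congr rfl fun i _ => hrw i]
      simp
    · intro n
      have hsum1 : (∑ i, (if i = j then (1:ℝ) else 0) * ω.1 (τ n) i) = ω.1 (τ n) j := by
        rw [Finset.sum_congr rfl fun i _ => by rw [ite_mul, one_mul, zero_mul]]
        simp
      have hsum2 : (∑ i, (if i = j then (1:ℝ) else 0) * ω.2 (τ n) i) = ω.2 (τ n) j := by
        rw [Finset.sum_congr rfl fun i _ => by rw [ite_mul, one_mul, zero_mul]]
        simp
      have h1 := (hsand n).1
      have h2 := (hsand n).2
      rw [(hTapp ω j (τ n)).1] at h1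
      rw [(hTapp ω j (τ n)).2] at h2
      rw [hsum1, hsum2]
      exact ⟨h1, h2⟩
  -- the measure lower bound in ℝ≥0∞
  have hlowENN : 1 - (1 - lamZ G) ^ d ≤ μW {ω : (Fin N → Fin d → ℝ) × (Fin N → Fin d → ℝ) |
      ∃ a : Fin d → ℝ, (∑ i, a i ^ 2) = 1 ∧
      ∃ (τ : Equiv.Perm (Fin N)) (b : Fin (N + 1) → ℝ), StrictAnti b ∧
        ∀ n : Fin N,
          (-b n.castSucc < ∑ i, a i * ω.1 (τ n) i ∧
            (∑ i, a i * ω.1 (τ n) i) < -b n.succ) ∧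
          (-b n.castSucc < ∑ i, a i * ω.2 (τ n) i ∧
            (∑ i, a i * ω.2 (τ n) i) < -b n.succ)} := by
    calc 1 - (1 - lamZ G) ^ d = (Measure.pi fun _ : Fin d => lamZ) U := hUmeasure.symm
      _ = μW (T ⁻¹' U) := (mpT.measure_preimage hUmeas.nullMeasurableSet).symm
      _ ≤ _ := measure_mono hsub
  rw [hP]
  set q : ℝ≥0∞ := lamZ G with hqdef
  have hqle1 : q ≤ 1 := prob_le_one
  set M : ℝ≥0∞ := μW {ω : (Fin N → Fin d → ℝ) × (Fin N → Fin d → ℝ) |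
      ∃ a : Fin d → ℝ, (∑ i, a i ^ 2) = 1 ∧
      ∃ (τ : Equiv.Perm (Fin N)) (b : Fin (N + 1) → ℝ), StrictAnti b ∧
        ∀ n : Fin N,
          (-b n.castSucc < ∑ i, a i * ω.1 (τ n) i ∧
            (∑ i, a i * ω.1 (τ n) i) < -b n.succ) ∧
          (-b n.castSucc < ∑ i, a i * ω.2 (τ n) i ∧
            (∑ i, a i * ω.2 (τ n) i) < -b n.succ)} with hM
  have hMle1 : M ≤ 1 := prob_le_one
  have hMne : M ≠ ⊤ := (lt_of_le_of_lt hMle1 ENNReal.one_lt_top).ne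
  set c : ℝ := (1 / Real.sqrt 2) * (Real.exp 1 / (2 * N)) ^ N with hcdef
  have hcnonneg : 0 ≤ c := by rw [hcdef]; positivity
  set qr : ℝ := q.toReal with hqr
  have hqr1 : qr ≤ 1 := by
    rw [hqr]
    calc q.toReal ≤ (1 : ℝ≥0∞).toReal := ENNReal.toReal_mono ENNReal.one_ne_top hqle1
      _ = 1 := by simp
  have hcq : c ≤ qr := by
    rw [hqr, hGq, hcdef]
    rw [ENNReal.toReal_mul, ENNReal.toReal_inv]
    simp only [ENNReal.toReal_natCast]
    have hst := stirling_lb (N := N) hN1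
    rw [div_eq_mul_inv] at hst
    calc (1 / Real.sqrt 2) * (Real.exp 1 / (2 * (N:ℝ))) ^ N
        ≤ ((Nat.factorial N : ℝ) * 2 ^ N) * ((Nat.factorial (N + N) : ℝ))⁻¹ := hst
      _ = ((Nat.factorial N * 2 ^ N : ℕ) : ℝ) * ((Nat.factorial (N + N) : ℝ))⁻¹ := by
          push_cast; ring
  constructor
  · have h1 : ((1 : ℝ≥0∞) - (1 - q) ^ d).toReal = 1 - (1 - qr) ^ d := by
      rw [ENNReal.toReal_sub_of_le (pow_le_one' tsub_le_self d) ENNReal.one_ne_top,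
        ENNReal.toReal_pow, ENNReal.toReal_sub_of_le hqle1 ENNReal.one_ne_top]
      simp [hqr]
    have hlowr : 1 - (1 - qr) ^ d ≤ M.toReal := by
      calc 1 - (1 - qr) ^ d = ((1 : ℝ≥0∞) - (1 - q) ^ d).toReal := h1.symm
        _ ≤ M.toReal := ENNReal.toReal_mono hMne hlowENN
    refine le_trans ?_ hlowr
    have hbase : (1 - qr) ^ d ≤ (1 - c) ^ d :=
      pow_le_pow_left₀ (by linarith) (by linarith) d
    linarith
  · calc M.toReal ≤ (1 : ℝ≥0∞).toReal := ENNReal.toReal_mono ENNReal.one_ne_top hMle1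
      _ = 1 := by simp
end

section
/- Let d ≥ 2, T > 0, and let D = {(x_n, y_n)}_{n=1}^N ⊂ ℝ^d × ℝ^d be a dataset with pairwise distinct inputs and pairwise distinct targets satisfying Assumption 1. Then there exist constant parameters (w_i, a_i, b_i)_{i=1}^N ⊂ ℝ^d × ℝ^d × ℝ such that for every n = 1, …, N there is a curve γ_n : [0,T] → ℝ^d with γ_n(0) = x_n, γ_n(T) = y_n, and γ_n'(t) = Σ_{i=1}^N w_i · max(a_i·γ_n(t) + b_i, 0) for all t ∈ [0,T]. -/
open Set

noncomputable section

open Filter Topology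

namespace S6

def E1 (q t : ℝ) : ℝ := if q = 0 then t else (Real.exp (q*t) - 1)/q
def J1 (q t : ℝ) : ℝ := if q = 0 then t^2/2 else (Real.exp (q*t) - 1 - q*t)/q^2

lemma E1_zero (q : ℝ) : E1 q 0 = 0 := by simp [E1]
lemma J1_zero (q : ℝ) : J1 q 0 = 0 := by simp [J1]

lemma q_mul_J1_add (q t : ℝ) : q * J1 q t + t = E1 q t := by
  unfold E1 J1
  by_cases h : q = 0
  · simp [h]
  · rw [if_neg h, if_neg h]; field_simp; ring

lemma hasDerivAt_E1 (q t : ℝ) : HasDerivAt (fun s => E1 q s) (Real.exp (q*t)) t := by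
  by_cases h : q = 0
  · have : (fun s => E1 q s) = fun s : ℝ => s := by funext s; simp [E1, h]
    rw [this, h]; simpa using hasDerivAt_id' t
  · have h1 : HasDerivAt (fun s : ℝ => q * s) q t := by
      simpa using (hasDerivAt_id t).const_mul q
    have h2 : HasDerivAt (fun s : ℝ => Real.exp (q*s)) (Real.exp (q*t) * q) t := h1.exp
    have h3 := (h2.sub_const 1).div_const q
    have : (fun s => E1 q s) = fun s : ℝ => (Real.exp (q*s) - 1)/q := by
      funext s; simp [E1, h]
    rw [this]
    exact h3.congr_deriv (by field_simp)
lemma hasDerivAt_J1 (q t : ℝ) : HasDerivAt (fun s => J1 q s) (E1 q t) t := by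
  by_cases h : q = 0
  · have : (fun s => J1 q s) = fun s : ℝ => s^2/2 := by funext s; simp [J1, h]
    rw [this]
    have := (hasDerivAt_pow 2 t).div_const 2
    simpa [E1, h] using this
  · have h1 : HasDerivAt (fun s : ℝ => q * s) q t := by
      simpa using (hasDerivAt_id t).const_mul q
    have h2 : HasDerivAt (fun s : ℝ => Real.exp (q*s)) (Real.exp (q*t) * q) t := h1.exp
    have h3 := ((h2.sub_const 1).sub h1).div_const (q^2)
    have : (fun s => J1 q s) = fun s : ℝ => (Real.exp (q*s) - 1 - q*s)/q^2 := by
      funext s; simp [J1, h]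
    rw [this]
    exact h3.congr_deriv (by simp [E1, h]; field_simp)

lemma E1_pos (q : ℝ) {t : ℝ} (ht : 0 < t) : 0 < E1 q t := by
  unfold E1
  by_cases h : q = 0
  · simpa [h] using ht
  · rw [if_neg h]
    rcases lt_or_gt_of_ne h with hq | hq
    · apply div_pos_of_neg_of_neg _ hq
      have : Real.exp (q*t) < 1 := Real.exp_lt_one_iff.mpr (mul_neg_of_neg_of_pos hq ht)
      linarith
    · apply div_pos _ hq
      have : 1 < Real.exp (q*t) := by
        have := Real.exp_lt_exp.mpr (show (0:ℝ) < q*t by positivity)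
        simpa using this
      linarith

lemma E1_nonneg (q : ℝ) {t : ℝ} (ht : 0 ≤ t) : 0 ≤ E1 q t := by
  rcases eq_or_lt_of_le ht with h | h
  · simp [← h, E1_zero]
  · exact (E1_pos q h).le

lemma E1_le (q : ℝ) {t T : ℝ} (h0 : 0 ≤ t) (h1 : t ≤ T) : E1 q t ≤ E1 q T := by
  unfold E1
  by_cases h : q = 0
  · simpa [h] using h1
  · rw [if_neg h, if_neg h]
    rw [div_eq_mul_inv, div_eq_mul_inv]
    rcases lt_or_gt_of_ne h with hq | hq
    · have h2 : Real.exp (q*T) ≤ Real.exp (q*t) := Real.exp_le_exp.mpr (by nlinarith)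
      have : q⁻¹ ≤ 0 := by simp [inv_nonpos, hq.le]
      nlinarith
    · have h2 : Real.exp (q*t) ≤ Real.exp (q*T) := Real.exp_le_exp.mpr (by nlinarith)
      have : 0 ≤ q⁻¹ := by positivity
      nlinarith


lemma J1_nonneg (q : ℝ) {t : ℝ} (ht : 0 ≤ t) : 0 ≤ J1 q t := by
  unfold J1
  by_cases h : q = 0
  · rw [if_pos h]; positivity
  · rw [if_neg h]
    have := Real.add_one_le_exp (q*t)
    have h2 : (0:ℝ) < q^2 := by positivity
    apply div_nonneg _ h2.le
    linarith

lemma J1_lt (q : ℝ) {T : ℝ} (hT : 0 < T) : J1 q T < T * E1 q T := by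
  unfold J1 E1
  by_cases h : q = 0
  · rw [if_pos h, if_pos h]; nlinarith
  · rw [if_neg h, if_neg h]
    have hqT : q*T ≠ 0 := mul_ne_zero h hT.ne'
    have hx : Real.exp (q*T) - 1 < q*T * Real.exp (q*T) := by
      have h1 := Real.add_one_lt_exp (show -(q*T) ≠ 0 by simpa using hqT)
      have h2 := Real.exp_pos (q*T)
      have h3 : Real.exp (-(q*T)) = (Real.exp (q*T))⁻¹ := Real.exp_neg _
      rw [h3] at h1
      have h4 : (-(q*T)+1) * Real.exp (q*T) < (Real.exp (q*T))⁻¹ * Real.exp (q*T) :=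
        mul_lt_mul_of_pos_right h1 h2
      rw [inv_mul_cancel₀ h2.ne'] at h4
      nlinarith
    rw [div_lt_iff₀ (by positivity : (0:ℝ) < q^2)]
    have : T * ((Real.exp (q * T) - 1) / q) * q ^ 2 = q*T*(Real.exp (q*T) - 1) := by
      field_simp
    rw [this]
    nlinarith

lemma continuous_E1T (T : ℝ) : Continuous fun q => E1 q T := by
  rw [continuous_iff_continuousAt]
  intro q
  by_cases hq : q = 0
  · subst hq
    have hd : HasDerivAt (fun q : ℝ => Real.exp (q*T)) T 0 := by
      have h1 : HasDerivAt (fun q : ℝ => q * T) T 0 := by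
        simpa using (hasDerivAt_id (0:ℝ)).mul_const T
      simpa using h1.exp
    have hs := hasDerivAt_iff_tendsto_slope.mp hd
    have heq : (fun q => E1 q T) =ᶠ[𝓝[≠] (0:ℝ)] slope (fun q => Real.exp (q*T)) 0 := by
      filter_upwards [self_mem_nhdsWithin] with z hz
      have hz' : (z:ℝ) ≠ 0 := hz
      simp [E1, hz', slope_def_field, div_eq_mul_inv]
    have h2 : Tendsto (fun q => E1 q T) (𝓝[≠] (0:ℝ)) (𝓝 T) := hs.congr' heq.symm
    have h3 : Tendsto (fun q => E1 q T) (pure (0:ℝ)) (𝓝 T) := by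
      have : E1 0 T = T := by simp [E1]
      simpa [this] using tendsto_pure_nhds (fun q => E1 q T) 0
    have h4 : Tendsto (fun q => E1 q T) (𝓝 (0:ℝ)) (𝓝 T) := by
      rw [← nhdsNE_sup_pure]
      exact Filter.tendsto_sup.mpr ⟨h2, h3⟩
    have h5 : E1 0 T = T := by simp [E1]
    rw [ContinuousAt]
    simp only [h5]
    exact h4
  · have hne : ∀ᶠ z in 𝓝 q, z ≠ 0 := eventually_ne_nhds hq
    have hc : ContinuousAt (fun z : ℝ => (Real.exp (z*T) - 1)/z) q := by
      apply ContinuousAt.div _ continuousAt_id hq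
      exact ((Real.continuous_exp.comp (continuous_id.mul continuous_const)).sub
        continuous_const).continuousAt
    apply hc.congr
    filter_upwards [hne] with z hz
    simp [E1, hz]


lemma exists_root (T s0 sT bm p0 q0 : ℝ) (hT : 0 < T) (h0 : -bm < s0) (h1 : -bm < sT) :
    ∃ q : ℝ, (sT - s0)/E1 q T - q*s0 - (p0 + (q - q0)*bm) = 0 := by
  set h : ℝ → ℝ := fun q => (sT - s0)/E1 q T - q*s0 - (p0 + (q - q0)*bm) with hh
  have hc : Continuous h := by
    apply Continuous.sub
    apply Continuous.sub
    · exact continuous_const.div (continuous_E1T T) (fun q => (E1_pos q hT).ne')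
    · exact continuous_id.mul continuous_const
    · exact (continuous_const.add ((continuous_id.sub continuous_const).mul
        continuous_const))
  set g : ℝ → ℝ := fun q => q * ((sT - s0)/(Real.exp (q*T) - 1) - (s0 + bm)) + (q0*bm - p0)
    with hg
  have h_eq_bot : h =ᶠ[atBot] g := by
    filter_upwards [eventually_lt_atBot (0:ℝ)] with q hq
    have hq0 : q ≠ 0 := ne_of_lt hq
    have hexp : Real.exp (q*T) - 1 ≠ 0 := by
      have : Real.exp (q*T) < 1 := Real.exp_lt_one_iff.mpr (mul_neg_of_neg_of_pos hq hT)
      linarith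
    simp only [hh, hg, E1, if_neg hq0]
    rw [div_div_eq_mul_div]
    field_simp
    ring
  have h_eq_top : h =ᶠ[atTop] g := by
    filter_upwards [eventually_gt_atTop (0:ℝ)] with q hq
    have hq0 : q ≠ 0 := ne_of_gt hq
    have hexp : Real.exp (q*T) - 1 ≠ 0 := by
      have : 1 < Real.exp (q*T) := by
        have := Real.exp_lt_exp.mpr (show (0:ℝ) < q*T by positivity)
        simpa using this
      linarith
    simp only [hh, hg, E1, if_neg hq0]
    rw [div_div_eq_mul_div]
    field_simp
    ring
  have lexp_bot : Tendsto (fun q : ℝ => Real.exp (q*T)) atBot (𝓝 0) :=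
    Real.tendsto_exp_atBot.comp (tendsto_id.atBot_mul_const hT)
  have lexp_top : Tendsto (fun q : ℝ => Real.exp (q*T)) atTop atTop :=
    Real.tendsto_exp_atTop.comp (tendsto_id.atTop_mul_const hT)
  have g_bot : Tendsto g atBot atTop := by
    have l2 : Tendsto (fun q : ℝ => (sT - s0)/(Real.exp (q*T) - 1) - (s0+bm)) atBot
        (𝓝 (-(sT+bm))) := by
      have l3 : Tendsto (fun q : ℝ => (sT - s0)/(Real.exp (q*T) - 1)) atBot
          (𝓝 ((sT-s0)/((0:ℝ)-1))) :=
        tendsto_const_nhds.div (lexp_bot.sub_const 1) (by norm_num)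
      have heq2 : (sT-s0)/((0:ℝ)-1) - (s0+bm) = -(sT+bm) := by ring
      have := l3.sub_const (s0+bm)
      rwa [heq2] at this
    have l4 : Tendsto (fun q : ℝ => q * ((sT - s0)/(Real.exp (q*T) - 1) - (s0+bm))) atBot
        atTop := Filter.Tendsto.atBot_mul_neg (by linarith) tendsto_id l2
    exact tendsto_atTop_add_const_right _ _ l4
  have g_top : Tendsto g atTop atBot := by
    have l2 : Tendsto (fun q : ℝ => (sT - s0)/(Real.exp (q*T) - 1) - (s0+bm)) atTop
        (𝓝 (0 - (s0+bm))) := by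
      have l3 : Tendsto (fun q : ℝ => (sT - s0)/(Real.exp (q*T) - 1)) atTop (𝓝 0) :=
        Filter.Tendsto.div_atTop tendsto_const_nhds (tendsto_atTop_add_const_right _ _ lexp_top)
      exact l3.sub_const (s0+bm)
    have l4 : Tendsto (fun q : ℝ => q * ((sT - s0)/(Real.exp (q*T) - 1) - (s0+bm))) atTop
        atBot := Filter.Tendsto.atTop_mul_neg (by linarith) tendsto_id l2
    exact tendsto_atBot_add_const_right _ _ l4
  have hsurj : Function.Surjective h :=
    Continuous.surjective' hc (g_bot.congr' h_eq_bot.symm) (g_top.congr' h_eq_top.symm)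
  exact hsurj 0


def Traj (N d : ℕ) (T : ℝ) (x y : Fin N → EuclideanSpace ℝ (Fin d))
    (a : EuclideanSpace ℝ (Fin d)) (b : Fin (N+1) → ℝ)
    (w : Fin N → EuclideanSpace ℝ (Fin d)) (k : Fin N) : Prop :=
  ∃ γ : ℝ → EuclideanSpace ℝ (Fin d),
    γ 0 = x k ∧ γ T = y k ∧
    ∀ t ∈ Icc (0:ℝ) T,
      (-b k.castSucc < (inner ℝ a (γ t) : ℝ) ∧ (inner ℝ a (γ t) : ℝ) < -b k.succ) ∧
      HasDerivWithinAt γ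
        (∑ i : Fin N, max ((inner ℝ a (γ t) : ℝ) + b i.castSucc) 0 • w i)
        (Icc (0:ℝ) T) t

set_option maxHeartbeats 3200000 in
theorem key (N d : ℕ) (T : ℝ) (hT : 0 < T)
    (x y : Fin N → EuclideanSpace ℝ (Fin d))
    (a : EuclideanSpace ℝ (Fin d)) (b : Fin (N+1) → ℝ) (hb : StrictAnti b)
    (hx : ∀ n : Fin N, -b n.castSucc < (inner ℝ a (x n) : ℝ) ∧ (inner ℝ a (x n) : ℝ) < -b n.succ)
    (hy : ∀ n : Fin N, -b n.castSucc < (inner ℝ a (y n) : ℝ) ∧ (inner ℝ a (y n) : ℝ) < -b n.succ) :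
    ∀ m : ℕ, m ≤ N → ∃ w : Fin N → EuclideanSpace ℝ (Fin d),
      ∀ k : Fin N, (k : ℕ) < m → Traj N d T x y a b w k := by
  intro m
  induction m with
  | zero => exact fun _ => ⟨0, fun k hk => absurd hk (Nat.not_lt_zero _)⟩
  | succ m ih =>
    intro hm1
    have hmN : m < N := hm1
    obtain ⟨w, hw⟩ := ih (le_of_lt hmN)
    set M : Fin N := ⟨m, hmN⟩ with hM
    set s0 : ℝ := inner ℝ a (x M) with hs0def
    set sT : ℝ := inner ℝ a (y M) with hsTdef
    set bm : ℝ := b M.castSucc with hbmdef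
    set bs : ℝ := b M.succ with hbsdef
    have hxM : -bm < s0 ∧ s0 < -bs := hx M
    have hyM : -bm < sT ∧ sT < -bs := hy M
    set F : Finset (Fin N) := Finset.univ.filter (fun i => (i:ℕ) < m) with hF
    set Q0 : EuclideanSpace ℝ (Fin d) := ∑ i ∈ F, w i with hQ0
    set P0 : EuclideanSpace ℝ (Fin d) := ∑ i ∈ F, b i.castSucc • w i with hP0
    set q0 : ℝ := inner ℝ a Q0 with hq0
    set p0 : ℝ := inner ℝ a P0 with hp0
    obtain ⟨q, hq⟩ := exists_root T s0 sT bm p0 q0 hT hxM.1 hyM.1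
    clear_value s0 sT bm bs Q0 P0 q0 p0
    set C : ℝ := (sT - s0)/E1 q T with hC
    set p : ℝ := C - q*s0 with hp
    set S : ℝ := s0*T + C * J1 q T with hS
    have hE1T : 0 < E1 q T := E1_pos q hT
    have hCE : C * E1 q T = sT - s0 := div_mul_cancel₀ _ hE1T.ne'
    have hroot : p0 + (q - q0)*bm = p := by
      rw [hp, hC]; linarith [hq]
    -- positivity of S + T * bm
    have hSb : 0 < S + T*bm := by
      have hJ0 : 0 ≤ J1 q T := J1_nonneg q hT.le
      have hJlt : J1 q T < T * E1 q T := J1_lt q hT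
      rcases le_or_gt 0 C with hCs | hCs
      · have : 0 ≤ C * J1 q T := mul_nonneg hCs hJ0
        nlinarith [hxM.1]
      · have h5 : C * (T * E1 q T) < C * J1 q T := by
          exact mul_lt_mul_of_neg_left hJlt hCs
        have h6 : C * (T * E1 q T) = T * (sT - s0) := by
          rw [show C * (T * E1 q T) = T * (C * E1 q T) by ring, hCE]
        nlinarith [hyM.1]
    set Sb : ℝ := S + T*bm with hSbdef
    set wn : EuclideanSpace ℝ (Fin d) := Sb⁻¹ • (y M - x M - S • Q0 - T • P0) with hwn
    set w' : Fin N → EuclideanSpace ℝ (Fin d) := Function.update w M wn with hw'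
    clear_value C p S Sb wn w'
    -- key scalar identity
    have hqS : q*S + T*p = sT - s0 := by
      have h3 := q_mul_J1_add q T
      calc q*S + T*p = C*(q * J1 q T + T) := by rw [hS, hp]; ring
        _ = C * E1 q T := by rw [h3]
        _ = sT - s0 := hCE
    have hg : (inner ℝ a wn : ℝ) = q - q0 := by
      have hin : (inner ℝ a wn : ℝ) = Sb⁻¹ * (sT - s0 - S*q0 - T*p0) := by
        rw [hwn, real_inner_smul_right]
        congr 1
        rw [inner_sub_right, inner_sub_right, inner_sub_right,
          real_inner_smul_right, real_inner_smul_right]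
        rw [← hsTdef, ← hs0def, ← hq0, ← hp0]
      rw [hin]
      have hnum : sT - s0 - S*q0 - T*p0 = (q - q0) * Sb := by
        rw [hSbdef]
        linear_combination -hqS - T*hroot
      rw [hnum, mul_comm Sb⁻¹, mul_assoc, mul_comm Sb, inv_mul_cancel₀ hSb.ne', mul_one]
    set Q : EuclideanSpace ℝ (Fin d) := Q0 + wn with hQ
    set P : EuclideanSpace ℝ (Fin d) := P0 + bm • wn with hP
    have hinQ : (inner ℝ a Q : ℝ) = q := by
      rw [hQ, inner_add_right, hg, ← hq0]; ring
    have hinP : (inner ℝ a P : ℝ) = p := by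
      rw [hP, inner_add_right, real_inner_smul_right, hg, ← hp0, ← hroot]; ring
    set σ : ℝ → ℝ := fun t => s0 + C * E1 q t with hσ
    set A : ℝ → ℝ := fun t => s0*t + C * J1 q t with hA
    set γ : ℝ → EuclideanSpace ℝ (Fin d) := fun t => x M + A t • Q + t • P with hγ
    clear_value Q P σ A γ
    have hγ0 : γ 0 = x M := by
      simp [hγ, hA, J1_zero]
    have hSbwn : Sb • wn = y M - x M - S • Q0 - T • P0 := by
      rw [hwn, smul_smul, mul_inv_cancel₀ hSb.ne', one_smul]
    have hγT : γ T = y M := by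
      have hAT : A T = S := by rw [hA, hS]
      simp only [hγ, hAT]
      have h7 : x M + S • Q + T • P = x M + (S • Q0 + T • P0 + Sb • wn) := by
        rw [hQ, hP, hSbdef]
        module
      rw [h7, hSbwn]
      abel
    have hσb : ∀ t ∈ Icc (0:ℝ) T, -bm < σ t ∧ σ t < -bs := by
      rintro t ⟨ht0, ht1⟩
      have e0 : 0 ≤ E1 q t := E1_nonneg q ht0
      have e1 : E1 q t ≤ E1 q T := E1_le q ht0 ht1
      simp only [hσ]
      rcases le_or_gt 0 C with hCs | hCs
      · have u1 : C * E1 q t ≤ C * E1 q T := mul_le_mul_of_nonneg_left e1 hCs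
        have u2 : 0 ≤ C * E1 q t := mul_nonneg hCs e0
        constructor
        · nlinarith [hxM.1]
        · nlinarith [hyM.2, hCE]
      · have u1 : C * E1 q T ≤ C * E1 q t := by nlinarith
        have u2 : C * E1 q t ≤ 0 := by nlinarith
        constructor
        · nlinarith [hyM.1, hCE]
        · nlinarith [hxM.2]
    have hinγ : ∀ t : ℝ, (inner ℝ a (γ t) : ℝ) = σ t := by
      intro t
      simp only [hγ]
      rw [inner_add_right, inner_add_right, real_inner_smul_right, real_inner_smul_right,
        hinQ, hinP, ← hs0def]
      simp only [hσ, hA, hp]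
      linear_combination C * (q_mul_J1_add q t)
    have hA' : ∀ t : ℝ, HasDerivAt A (σ t) t := by
      intro t
      have h1 : HasDerivAt (fun t : ℝ => s0 * t) s0 t := by
        simpa using (hasDerivAt_id t).const_mul s0
      have h2 : HasDerivAt (fun t : ℝ => C * J1 q t) (C * E1 q t) t :=
        (hasDerivAt_J1 q t).const_mul C
      simp only [hA, hσ]
      exact h1.add h2
    have hγ' : ∀ t : ℝ, HasDerivAt γ (σ t • Q + P) t := by
      intro t
      have h1 : HasDerivAt (fun t => A t • Q) (σ t • Q) t := (hA' t).smul_const Q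
      have h2 : HasDerivAt (fun t : ℝ => t • P) ((1:ℝ) • P) t := (hasDerivAt_id t).smul_const P
      have h3 := (h1.const_add (x M)).add h2
      rw [one_smul] at h3
      rw [hγ]
      exact h3
    have hMF : M ∉ F := by simp [hF, hM]
    have hw'M : w' M = wn := by rw [hw']; exact Function.update_self _ _ _
    have hsum : ∀ t ∈ Icc (0:ℝ) T,
        (∑ i : Fin N, max ((inner ℝ a (γ t) : ℝ) + b i.castSucc) 0 • w' i) = σ t • Q + P := by
      intro t ht
      have hsb := hσb t ht
      have hterm : ∀ i : Fin N, max ((inner ℝ a (γ t) : ℝ) + b i.castSucc) 0 • w' i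
          = if (i:ℕ) ≤ m then (σ t + b i.castSucc) • w' i else 0 := by
        intro i
        rw [hinγ t]
        by_cases hi : (i:ℕ) ≤ m
        · rw [if_pos hi]
          congr 1
          apply max_eq_left
          have : bm ≤ b i.castSucc := by
            rw [hbmdef]
            apply hb.antitone
            rw [Fin.le_def]
            simp only [Fin.coe_castSucc, hM]
            exact hi
          linarith [hsb.1]
        · rw [if_neg hi]
          have : b i.castSucc ≤ bs := by
            rw [hbsdef]
            apply hb.antitone
            simp only [Fin.le_def, Fin.coe_castSucc, Fin.val_succ, hM]
            omega
          have hmax : max ((σ t) + b i.castSucc) 0 = 0 := by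
            apply max_eq_right
            linarith [hsb.2]
          rw [hmax, zero_smul]
      rw [Finset.sum_congr rfl (fun i _ => hterm i), ← Finset.sum_filter]
      have hF' : Finset.univ.filter (fun i : Fin N => (i:ℕ) ≤ m) = insert M F := by
        ext i
        simp only [Finset.mem_filter, Finset.mem_univ, true_and, Finset.mem_insert, hF]
        have hMm : (M:ℕ) = m := by rw [hM]
        constructor
        · intro hi
          rcases Nat.lt_or_ge (i:ℕ) m with h' | h'
          · exact Or.inr h'
          · exact Or.inl (by apply Fin.ext; omega)
        · rintro (rfl | hi)
          · simp [hM]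
          · omega
      rw [hF', Finset.sum_insert hMF, hw'M, ← hbmdef]
      have hrest : ∀ i ∈ F, (σ t + b i.castSucc) • w' i = (σ t + b i.castSucc) • w i := by
        intro i hi
        have : i ≠ M := by
          intro hc
          rw [hc] at hi
          exact hMF hi
        rw [hw', Function.update_of_ne this]
      rw [Finset.sum_congr rfl hrest]
      have hFsum : ∑ i ∈ F, (σ t + b i.castSucc) • w i = σ t • Q0 + P0 := by
        rw [hQ0, hP0, Finset.smul_sum, ← Finset.sum_add_distrib]
        apply Finset.sum_congr rfl
        intro i _
        rw [add_smul]
      rw [hFsum, hQ, hP]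
      module
    -- assemble
    refine ⟨w', fun k hk => ?_⟩
    rcases Nat.lt_succ_iff_lt_or_eq.mp hk with hk' | hk'
    · obtain ⟨γ₁, hγ₁0, hγ₁T, hcl⟩ := hw k hk'
      refine ⟨γ₁, hγ₁0, hγ₁T, fun t ht => ⟨(hcl t ht).1, ?_⟩⟩
      have hd := (hcl t ht).2
      have heq : (∑ i : Fin N, max ((inner ℝ a (γ₁ t) : ℝ) + b i.castSucc) 0 • w' i)
          = ∑ i : Fin N, max ((inner ℝ a (γ₁ t) : ℝ) + b i.castSucc) 0 • w i := by
        apply Finset.sum_congr rfl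
        intro i _
        by_cases hiM : i = M
        · subst hiM
          have h5 : b M.castSucc ≤ b k.succ := by
            apply hb.antitone
            rw [Fin.le_def]
            simp only [Fin.coe_castSucc, Fin.val_succ, hM]
            omega
          have h6 : max ((inner ℝ a (γ₁ t) : ℝ) + b M.castSucc) 0 = 0 := by
            apply max_eq_right
            linarith [((hcl t ht).1).2]
          rw [h6, zero_smul, zero_smul]
        · rw [hw', Function.update_of_ne hiM]
      rw [heq]
      exact hd
    · have hkM : k = M := by apply Fin.ext; simp [hM, hk']
      subst hkM
      refine ⟨γ, hγ0, hγT, fun t ht => ⟨?_, ?_⟩⟩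
      · rw [hinγ t, ← hbmdef, ← hbsdef]
        exact hσb t ht
      · rw [hsum t ht]
        exact (hγ' t).hasDerivWithinAt

end S6

open S6 in
/-- Under the diagonal separability assumption (Assumption 1), a shallow
(autonomous) neural ODE of width `p = N` with constant parameters interpolates
the dataset in time `T`. -/
theorem statement6 (N d : ℕ) (hN : 1 ≤ N) (hd : 2 ≤ d) (T : ℝ) (hT : 0 < T)
    (x y : Fin N → EuclideanSpace ℝ (Fin d))
    (hx : Function.Injective x) (hy : Function.Injective y)
    (hsep : ∃ a : EuclideanSpace ℝ (Fin d), ‖a‖ = 1 ∧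
      ∃ (τ : Equiv.Perm (Fin N)) (b : Fin (N + 1) → ℝ), StrictAnti b ∧
        ∀ n : Fin N,
          (-b n.castSucc < (inner ℝ a (x (τ n)) : ℝ) ∧
            (inner ℝ a (x (τ n)) : ℝ) < -b n.succ) ∧
          (-b n.castSucc < (inner ℝ a (y (τ n)) : ℝ) ∧
            (inner ℝ a (y (τ n)) : ℝ) < -b n.succ)) :
    ∃ (w a : Fin N → EuclideanSpace ℝ (Fin d)) (b : Fin N → ℝ),
      ∀ n : Fin N, ∃ γ : ℝ → EuclideanSpace ℝ (Fin d),
        γ 0 = x n ∧ γ T = y n ∧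
        ∀ t ∈ Set.Icc (0 : ℝ) T,
          HasDerivWithinAt γ
            (∑ i : Fin N, max ((inner ℝ (a i) (γ t) : ℝ) + b i) 0 • w i)
            (Set.Icc (0 : ℝ) T) t := by

  obtain ⟨a, -, τ, b, hb, hs⟩ := hsep
  obtain ⟨w, hw⟩ := key N d T hT (fun n => x (τ n)) (fun n => y (τ n)) a b hb
    (fun n => (hs n).1) (fun n => (hs n).2) N le_rfl
  refine ⟨w, fun _ => a, fun i => b i.castSucc, fun n => ?_⟩
  obtain ⟨γ, h0, h1, h2⟩ := hw (τ.symm n) (Fin.is_lt _)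
  refine ⟨γ, ?_, ?_, fun t ht => (h2 t ht).2⟩
  · simpa using h0
  · simpa using h1
end
end

section
/- Let d ≥ 2, T > 0, n ≥ 2, vectors w_1, …, w_{n−1} ∈ ℝ^d, and reals b_1 > b_2 > ⋯ > b_{n−1}. Let x_n, y_n ∈ ℝ^d with x_n ≠ y_n, x_n^{(1)} + b_{n−1} > 0 and y_n^{(1)} + b_{n−1} > 0. Then there exist w_n ∈ ℝ^d and b_n ∈ ℝ with b_n < b_{n−1}, x_n^{(1)} + b_n > 0 and y_n^{(1)} + b_n > 0, such that the solution of the Cauchy problem ẋ(t) = Σ_{i=1}^{n−1} w_i · max(x^{(1)}(t) + b_i, 0) + w_n · max(x^{(1)}(t) + b_n, 0), x(0) = x_n, satisfies x(T) = y_n. -/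
/-!
Take the new bias `bn` below every `bᵢ` and below `-x⁽¹⁾`, `-y⁽¹⁾`. While the trajectory keeps
`x⁽¹⁾ + bn > 0` all neurons are active, so with `wn = A - ∑ wᵢ` the field is the affine field
`(x⁽¹⁾ + bn) • A + C` with `C = ∑ (bᵢ - bn) • wᵢ`. Its first coordinate `z = x⁽¹⁾ + bn` solves
`z' = A⁽¹⁾ z + C⁽¹⁾`, and `z(T)` sweeps out `(0, ∞)` as `A⁽¹⁾` runs over `ℝ`; the intermediate value
theorem fixes `A⁽¹⁾`, `z` stays positive on `[0, T]`, and then `x(T) = x + (∫₀ᵀ z) • A + T • C` can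
be solved for `A`, consistently with the chosen first coordinate.
-/

open Set Filter Topology Real

noncomputable def expIntegral (a t : ℝ) : ℝ := ∫ s in (0:ℝ)..t, exp (a * s)

/-- The solution `z₀ e^{at} + k ∫₀ᵗ e^{as} ds` of `z' = a z + k`, `z 0 = z₀`, rewritten with
`a ∫₀ᵗ e^{as} ds = e^{at} - 1` so that it is visibly monotone in `t`. -/
noncomputable def affineFlow (a k z₀ t : ℝ) : ℝ := z₀ + (a * z₀ + k) * expIntegral a t

section ExpIntegral

variable {a t : ℝ}

lemma expIntegral_zero (a : ℝ) : expIntegral a 0 = 0 := intervalIntegral.integral_same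

lemma hasDerivAt_expIntegral (a t : ℝ) : HasDerivAt (expIntegral a) (exp (a * t)) t :=
  ((continuous_const.mul continuous_id).rexp.integral_hasStrictDerivAt 0 t).hasDerivAt

lemma monotone_expIntegral (a : ℝ) : Monotone (expIntegral a) :=
  monotone_of_hasDerivAt_nonneg (hasDerivAt_expIntegral a) fun _ => (exp_pos _).le

lemma mul_expIntegral (a t : ℝ) : a * expIntegral a t = exp (a * t) - 1 := by
  have h : ∀ s ∈ uIcc 0 t, HasDerivAt (fun s => exp (a * s)) (a * exp (a * s)) s := fun s _ => by
    simpa [mul_comm] using ((hasDerivAt_id s).const_mul a).exp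
  rw [expIntegral, ← intervalIntegral.integral_const_mul,
    intervalIntegral.integral_eq_sub_of_hasDerivAt h
      ((by fun_prop : Continuous fun s => a * exp (a * s)).intervalIntegrable 0 t),
    mul_zero, exp_zero]

lemma continuous_expIntegral_left (t : ℝ) : Continuous fun a => expIntegral a t :=
  intervalIntegral.continuous_parametric_intervalIntegral_of_continuous' (by fun_prop) 0 t

lemma le_expIntegral (ha : 0 ≤ a) (ht : 0 ≤ t) : t ≤ expIntegral a t := by
  have h : ∫ _ in (0:ℝ)..t, (1:ℝ) ≤ expIntegral a t :=
    intervalIntegral.integral_mono_on ht intervalIntegrable_const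
      ((by fun_prop : Continuous fun s => exp (a * s)).intervalIntegrable 0 t)
      fun s hs => one_le_exp (mul_nonneg ha hs.1)
  simpa using h

lemma tendsto_expIntegral_atBot (ht : 0 < t) :
    Tendsto (fun a => expIntegral a t) atBot (𝓝 0) := by
  have h : Tendsto (fun a => (exp (a * t) - 1) * a⁻¹) atBot (𝓝 ((0 - 1) * 0)) :=
    ((tendsto_exp_atBot.comp (tendsto_id.atBot_mul_const ht)).sub_const 1).mul
      tendsto_inv_atBot_zero
  rw [mul_zero] at h
  refine h.congr' ?_
  filter_upwards [eventually_lt_atBot 0] with a ha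
  rw [← mul_expIntegral, mul_comm, inv_mul_cancel_left₀ ha.ne]

end ExpIntegral

section AffineFlow

variable {a k z₀ T : ℝ}

lemma affineFlow_zero (a k z₀ : ℝ) : affineFlow a k z₀ 0 = z₀ := by
  simp [affineFlow, expIntegral_zero]

lemma hasDerivAt_affineFlow (a k z₀ t : ℝ) :
    HasDerivAt (affineFlow a k z₀) (a * affineFlow a k z₀ t + k) t := by
  have h : HasDerivAt (affineFlow a k z₀) ((a * z₀ + k) * exp (a * t)) t :=
    ((hasDerivAt_expIntegral a t).const_mul (a * z₀ + k)).const_add z₀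
  convert h using 1
  simp only [affineFlow]
  linear_combination (a * z₀ + k) * mul_expIntegral a t

lemma continuous_affineFlow_left (k z₀ T : ℝ) : Continuous fun a => affineFlow a k z₀ T :=
  continuous_const.add
    (((continuous_id.mul continuous_const).add continuous_const).mul (continuous_expIntegral_left T))

lemma tendsto_affineFlow_atBot (hT : 0 < T) :
    Tendsto (fun a => affineFlow a k z₀ T) atBot (𝓝 0) := by
  have hΦ := tendsto_expIntegral_atBot hT
  have haΦ : Tendsto (fun a => a * expIntegral a T) atBot (𝓝 (0 - 1)) := by
    simp_rw [mul_expIntegral]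
    exact (tendsto_exp_atBot.comp (tendsto_id.atBot_mul_const hT)).sub_const 1
  have h := (tendsto_const_nhds (x := z₀)).add ((haΦ.const_mul z₀).add (hΦ.const_mul k))
  simp only [mul_zero, add_zero] at h
  convert h using 2 with a
  · simp only [affineFlow]; ring
  · ring

lemma tendsto_affineFlow_atTop (hT : 0 < T) (hz₀ : 0 < z₀) :
    Tendsto (fun a => affineFlow a k z₀ T) atTop atTop := by
  have hlin : Tendsto (fun a => z₀ * T * a + (z₀ + k * T)) atTop atTop :=
    tendsto_atTop_add_const_right _ _ (tendsto_id.const_mul_atTop (mul_pos hz₀ hT))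
  refine tendsto_atTop_mono' _ ?_ hlin
  filter_upwards [eventually_ge_atTop 0, eventually_ge_atTop (-k / z₀)] with a ha hak
  have hc : 0 ≤ a * z₀ + k := by rw [div_le_iff₀ hz₀] at hak; linarith
  have := mul_le_mul_of_nonneg_left (le_expIntegral ha hT.le) hc
  simp only [affineFlow]
  linarith

lemma exists_affineFlow_eq (k : ℝ) {z₁ : ℝ} (hT : 0 < T) (hz₀ : 0 < z₀) (hz₁ : 0 < z₁) :
    ∃ a, affineFlow a k z₀ T = z₁ :=
  mem_range_of_exists_le_of_exists_ge (continuous_affineFlow_left k z₀ T)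
    ((tendsto_affineFlow_atBot hT).eventually_le_const hz₁).exists
    ((tendsto_affineFlow_atTop hT hz₀).eventually_ge_atTop z₁).exists

lemma affineFlow_pos_of_mem_Icc (hz₀ : 0 < z₀) (hzT : 0 < affineFlow a k z₀ T) {t : ℝ}
    (ht : t ∈ Icc 0 T) : 0 < affineFlow a k z₀ t := by
  have h₀ : 0 ≤ expIntegral a t := expIntegral_zero a ▸ monotone_expIntegral a ht.1
  have h₁ : expIntegral a t ≤ expIntegral a T := monotone_expIntegral a ht.2
  simp only [affineFlow] at *
  rcases le_total 0 (a * z₀ + k) with hc | hc <;> nlinarith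

end AffineFlow

lemma eq_add_integral_of_hasDerivAt {z : ℝ → ℝ} {a k : ℝ}
    (hz : ∀ t, HasDerivAt z (a * z t + k) t) (t : ℝ) :
    z t = z 0 + a * (∫ s in (0:ℝ)..t, z s) + k * t := by
  have hcont : Continuous z := continuous_iff_continuousAt.2 fun t => (hz t).continuousAt
  have h := intervalIntegral.integral_eq_sub_of_hasDerivAt (fun s _ => hz s)
    ((by fun_prop : Continuous fun s => a * z s + k).intervalIntegrable 0 t)
  rw [intervalIntegral.integral_add ((hcont.intervalIntegrable 0 t).const_mul a)
    intervalIntegrable_const, intervalIntegral.integral_const_mul,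
    intervalIntegral.integral_const] at h
  simp only [sub_zero, smul_eq_mul] at h
  linarith

theorem exists_steering_of_affine_field {E : Type*} [NormedAddCommGroup E] [NormedSpace ℝ E]
    (ℓ : E →L[ℝ] ℝ) (β : ℝ) (C x y : E) {T : ℝ} (hT : 0 < T)
    (hx : 0 < ℓ x + β) (hy : 0 < ℓ y + β) :
    ∃ (A : E) (γ : ℝ → E), γ 0 = x ∧ γ T = y ∧
      ∀ t ∈ Icc 0 T, 0 < ℓ (γ t) + β ∧ HasDerivAt γ ((ℓ (γ t) + β) • A + C) t := by
  obtain ⟨a, hzT⟩ := exists_affineFlow_eq (ℓ C) hT hx hy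
  have hzT_pos : 0 < affineFlow a (ℓ C) (ℓ x + β) T := hzT ▸ hy
  set z := affineFlow a (ℓ C) (ℓ x + β)
  set Z : ℝ → ℝ := fun t => ∫ s in (0:ℝ)..t, z s
  have hz : ∀ t, HasDerivAt z (a * z t + ℓ C) t := hasDerivAt_affineFlow a (ℓ C) (ℓ x + β)
  have hz_cont : Continuous z := continuous_iff_continuousAt.2 fun t => (hz t).continuousAt
  have hz_pos : ∀ t ∈ Icc 0 T, 0 < z t := fun t ht =>
    affineFlow_pos_of_mem_Icc hx hzT_pos ht
  have hz_eq : ∀ t, z t = ℓ x + β + a * Z t + ℓ C * t := fun t => by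
    rw [eq_add_integral_of_hasDerivAt hz t, show z 0 = ℓ x + β from affineFlow_zero ..]
  have hZT : 0 < Z T := intervalIntegral.intervalIntegral_pos_of_pos_on
    (hz_cont.intervalIntegrable 0 T) (fun t ht => hz_pos t (Ioo_subset_Icc_self ht)) hT
  set A : E := (Z T)⁻¹ • (y - x - T • C)
  have hℓA : ℓ A = a := by
    have := hz_eq T
    simp only [A, map_smul, map_sub, smul_eq_mul]
    field_simp
    linarith
  refine ⟨A, fun t => x + Z t • A + t • C, by simp [Z], ?_, fun t ht => ?_⟩
  · simp only [A, smul_smul, mul_inv_cancel₀ hZT.ne', one_smul]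
    abel
  · have hℓγ : ℓ (x + Z t • A + t • C) + β = z t := by
      simp only [map_add, map_smul, hℓA, smul_eq_mul, hz_eq t]
      ring
    rw [hℓγ]
    refine ⟨hz_pos t ht, ?_⟩
    have hZ : HasDerivAt Z (z t) t := (hz_cont.integral_hasStrictDerivAt 0 t).hasDerivAt
    have h := ((hasDerivAt_const t x).add (hZ.smul_const A)).add ((hasDerivAt_id t).smul_const C)
    rwa [zero_add, one_smul] at h

lemma sum_relu_smul_add_relu_smul {ι E : Type*} [Fintype ι] [AddCommGroup E] [Module ℝ E]
    (w : ι → E) (b : ι → ℝ) (A : E) {s b₀ : ℝ} (hb : ∀ i, b₀ ≤ b i) (hs : 0 < s + b₀) :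
    (∑ i, max (s + b i) 0 • w i) + max (s + b₀) 0 • (A - ∑ i, w i) =
      (s + b₀) • A + ∑ i, (b i - b₀) • w i := by
  have hsum : ∑ i, max (s + b i) 0 • w i = (s + b₀) • ∑ i, w i + ∑ i, (b i - b₀) • w i := by
    rw [Finset.smul_sum, ← Finset.sum_add_distrib]
    refine Finset.sum_congr rfl fun i _ => ?_
    rw [max_eq_left (by linarith [hb i]), ← add_smul]
    ring_nf
  rw [hsum, max_eq_left hs.le, smul_sub]
  abel

/-- One more neuron suffices to steer a new point against the drift created by
`m = n - 1` previously fixed neurons whose biases satisfy `b₁ > ⋯ > b_{n-1}`. -/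
theorem statement8 (d m : ℕ) (hd : 2 ≤ d) (hm : 1 ≤ m) (T : ℝ) (hT : 0 < T)
    (w : Fin m → EuclideanSpace ℝ (Fin d)) (b : Fin m → ℝ) (hb : StrictAnti b)
    (xn yn : EuclideanSpace ℝ (Fin d))
    (hx : xn ⟨0, by omega⟩ + b ⟨m - 1, by omega⟩ > 0)
    (hy : yn ⟨0, by omega⟩ + b ⟨m - 1, by omega⟩ > 0) :
    ∃ (wn : EuclideanSpace ℝ (Fin d)) (bn : ℝ),
      bn < b ⟨m - 1, by omega⟩ ∧
      xn ⟨0, by omega⟩ + bn > 0 ∧ yn ⟨0, by omega⟩ + bn > 0 ∧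
      ∃ γ : ℝ → EuclideanSpace ℝ (Fin d),
        γ 0 = xn ∧ γ T = yn ∧
        ∀ t ∈ Set.Icc (0 : ℝ) T,
          HasDerivWithinAt γ
            ((∑ i : Fin m, max (γ t ⟨0, by omega⟩ + b i) 0 • w i) +
              max (γ t ⟨0, by omega⟩ + bn) 0 • wn)
            (Set.Icc (0 : ℝ) T) t := by
  set i₀ : Fin d := ⟨0, by omega⟩
  set last : Fin m := ⟨m - 1, by omega⟩
  have hx' : -xn i₀ < b last := by linarith
  have hy' : -yn i₀ < b last := by linarith
  obtain ⟨bn, hbn_gt, hbn_lt⟩ := exists_between (max_lt hx' hy')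
  rw [max_lt_iff] at hbn_gt
  have hb_le : ∀ i, bn ≤ b i := fun i =>
    hbn_lt.le.trans (hb.antitone (show i ≤ last from Fin.le_def.2 (by simp only [last]; omega)))
  obtain ⟨A, γ, hγ0, hγT, hγ⟩ := exists_steering_of_affine_field (EuclideanSpace.proj i₀) bn
    (∑ i, (b i - bn) • w i) xn yn hT (show 0 < xn i₀ + bn by linarith)
    (show 0 < yn i₀ + bn by linarith)
  refine ⟨A - ∑ i, w i, bn, hbn_lt, by linarith, by linarith, γ, hγ0, hγT, fun t ht => ?_⟩
  obtain ⟨hpos, hderiv⟩ := hγ t ht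
  rw [sum_relu_smul_add_relu_smul w b A (s := γ t i₀) hb_le hpos]
  exact hderiv.hasDerivWithinAt
end
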